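/- Let T > 0, let h : ℝ → ℝ be Lipschitz continuous, let α : [0,T] → ℝ be Lipschitz continuous, and let y₀ ∈ ℝ. If Θ_n (n ≥ 1) and Θ are càdlàg functions on [0,T] such that Θ_n → Θ in the Skorokhod J1 topology, then the impact processes converge Y^{Θ_n} → Y^{Θ} in the Skorokhod J1 topology (all solutions taken with the same initial value y₀). -/

import Mathlib

open Filter Set MeasureTheory Topology

noncomputable section

/-- A function `x : ℝ → ℝ` is càdlàg on `[0,T]`. -/
def Cadlag (T : ℝ) (x : ℝ → ℝ) : Prop :=
  (∀ t ∈ Set.Ico (0:ℝ) T, Filter.Tendsto x (nhdsWithin t (Set.Ici t)) (nhds (x t))) ∧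
  (∀ t ∈ Set.Ioc (0:ℝ) T, ∃ L : ℝ, Filter.Tendsto x (nhdsWithin t (Set.Iio t)) (nhds L))

/-- `Y` is the market impact process on `[0,T]` driven by the càdlàg strategy `Θ`. -/
def ImpactSol (T : ℝ) (h α : ℝ → ℝ) (y₀ : ℝ) (Θ Y : ℝ → ℝ) : Prop :=
  Cadlag T Y ∧ ∀ t ∈ Set.Icc (0:ℝ) T,
    Y t = y₀ + (Θ t - Θ 0) - ∫ s in (0:ℝ)..t, h (Y s) * α s

/-- Convergence `xₙ → x₀` in the Skorokhod J1 topology on `D([0,T];ℝ)`: there are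
strictly increasing continuous bijections `λₙ : [0,T] → [0,T]` with
`sup_{[0,T]} |λₙ(t) − t| → 0` and `sup_{[0,T]} |xₙ(λₙ(t)) − x₀(t)| → 0`. -/
def TendstoJ1 (T : ℝ) (x : ℕ → ℝ → ℝ) (x₀ : ℝ → ℝ) : Prop :=
  ∃ lam : ℕ → ℝ → ℝ,
    (∀ n, ContinuousOn (lam n) (Set.Icc 0 T) ∧ StrictMonoOn (lam n) (Set.Icc 0 T) ∧
      lam n 0 = 0 ∧ lam n T = T ∧ Set.MapsTo (lam n) (Set.Icc 0 T) (Set.Icc 0 T)) ∧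
    (∀ ε > (0:ℝ), ∃ N : ℕ, ∀ n ≥ N, ∀ t ∈ Set.Icc (0:ℝ) T,
      |lam n t - t| ≤ ε ∧ |x n (lam n t) - x₀ t| ≤ ε)

/-!
Keep the time changes `λₙ` of `Θₙ → Θ`. With the drifts `Fₙ = h(Yₙ)·α` and `F = h(Y)·α`,
`Yₙ(λₙ t) − Y(t) = (Θₙ(λₙ t) − Θ(t)) − (Θₙ(0) − Θ(0)) − ∫₀^{λₙ t} (Fₙ − F) − ∫ₜ^{λₙ t} F`.
The first two terms are small by assumption and the last is `O(|λₙ t − t|)` since `F` is bounded.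
Since `h` is Lipschitz, Grönwall's inequality bounds `∫₀ᵀ |Fₙ − F|` by a multiple of
`∫₀ᵀ |Θₙ − Θ| + T |Θₙ(0) − Θ(0)|`, which tends to `0` by dominated convergence: `Θₙ → Θ` at every
continuity point of `Θ`, and a càdlàg function has only countably many jumps.
-/

theorem integrableOn_Icc_of_abs_le {f : ℝ → ℝ} {a b M : ℝ}
    (hf : AEStronglyMeasurable f (volume.restrict (Icc a b))) (hM : ∀ s ∈ Icc a b, |f s| ≤ M) :
    IntegrableOn f (Icc a b) :=
  IntegrableOn.of_bound measure_Icc_lt_top hf M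
    ((ae_restrict_iff' measurableSet_Icc).2 (ae_of_all _ hM))

def bigLeftJumps (T ε : ℝ) (x : ℝ → ℝ) : Set ℝ :=
  {u ∈ Ioo 0 T | ∃ᶠ v in 𝓝[<] u, ε ≤ dist (x v) (x u)}

namespace Cadlag

variable {T : ℝ} {x : ℝ → ℝ}

theorem eventually_abs_le (hx : Cadlag T x) {t : ℝ} (ht : t ∈ Icc 0 T) :
    ∃ M, ∀ᶠ s in 𝓝[Icc 0 T] t, |x s| ≤ M := by
  obtain ⟨M₁, hM₁⟩ : ∃ M, ∀ᶠ s in 𝓝[Icc 0 T ∩ Iio t] t, |x s| ≤ M := by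
    rcases ht.1.eq_or_lt with rfl | h0t
    · exact ⟨0, eventually_nhdsWithin_of_forall fun s hs => absurd hs.1.1 (not_le.2 hs.2)⟩
    · obtain ⟨L, hL⟩ := hx.2 t ⟨h0t, ht.2⟩
      exact ⟨|L| + 1, nhdsWithin_mono _ inter_subset_right
        (hL.abs.eventually (ge_mem_nhds (lt_add_one _)))⟩
  obtain ⟨M₂, hM₂⟩ : ∃ M, ∀ᶠ s in 𝓝[Icc 0 T ∩ Ici t] t, |x s| ≤ M := by
    rcases ht.2.eq_or_lt with rfl | htT
    · exact ⟨|x t|, eventually_nhdsWithin_of_forall fun s hs => by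
        rw [le_antisymm hs.1.2 hs.2]⟩
    · exact ⟨|x t| + 1, nhdsWithin_mono _ inter_subset_right
        ((hx.1 t ⟨ht.1, htT⟩).abs.eventually (ge_mem_nhds (lt_add_one _)))⟩
  refine ⟨max M₁ M₂, ?_⟩
  rw [← inter_univ (Icc 0 T), ← Iio_union_Ici (a := t), inter_union_distrib_left,
    nhdsWithin_union, eventually_sup]
  exact ⟨hM₁.mono fun s hs => hs.trans (le_max_left _ _),
    hM₂.mono fun s hs => hs.trans (le_max_right _ _)⟩

theorem exists_bound (hx : Cadlag T x) : ∃ M, ∀ s ∈ Icc 0 T, |x s| ≤ M := by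
  refine isCompact_Icc.induction_on (p := fun S => ∃ M, ∀ s ∈ S, |x s| ≤ M)
    ⟨0, by simp⟩ ?_ ?_ ?_
  · rintro S S' hSS' ⟨M, hM⟩
    exact ⟨M, fun s hs => hM s (hSS' hs)⟩
  · rintro S S' ⟨M, hM⟩ ⟨M', hM'⟩
    exact ⟨max M M', fun s hs => hs.elim (fun h => (hM s h).trans (le_max_left _ _))
      (fun h => (hM' s h).trans (le_max_right _ _))⟩
  · intro t ht
    obtain ⟨M, hM⟩ := hx.eventually_abs_le ht
    exact ⟨_, hM, M, fun s hs => hs⟩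

/-- Close to the left of `s`, `x` stays within `ε / 2` of its left limit at `s`. -/
theorem nhdsWithin_bigLeftJumps_inter_Iio_eq_bot (hx : Cadlag T x) {ε : ℝ} (hε : 0 < ε) {s : ℝ}
    (hs : s ∈ Ioo 0 T) : 𝓝[bigLeftJumps T ε x ∩ Iio s] s = ⊥ := by
  obtain ⟨L, hL⟩ := hx.2 s ⟨hs.1, hs.2.le⟩
  obtain ⟨a, has, hnear⟩ := mem_nhdsLT_iff_exists_Ioo_subset.1
    (hL.eventually (Metric.ball_mem_nhds L (half_pos hε)))
  rw [← empty_mem_iff_bot]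
  filter_upwards [nhdsWithin_mono _ inter_subset_right (Ioo_mem_nhdsLT has),
    self_mem_nhdsWithin] with u hu ⟨⟨_, hjump⟩, _⟩
  have hclose : ∀ᶠ v in 𝓝[<] u, dist (x v) (x u) < ε := by
    filter_upwards [Ioo_mem_nhdsLT hu.1] with v hv
    calc dist (x v) (x u) ≤ dist (x v) L + dist (x u) L := dist_triangle_right _ _ _
      _ < ε / 2 + ε / 2 := add_lt_add (hnear ⟨hv.1, hv.2.trans hu.2⟩) (hnear hu)
      _ = ε := add_halves ε
  obtain ⟨v, hge, hlt⟩ := (hjump.and_eventually hclose).exists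
  exact (hge.not_gt hlt).elim

theorem countable_bigLeftJumps (hx : Cadlag T x) {ε : ℝ} (hε : 0 < ε) :
    (bigLeftJumps T ε x).Countable :=
  countable_setOfPred_isolated_left_within.mono fun s hs =>
    (⟨hs, hx.nhdsWithin_bigLeftJumps_inter_Iio_eq_bot hε hs.1⟩ :
      s ∈ {u ∈ bigLeftJumps T ε x | 𝓝[bigLeftJumps T ε x ∩ Iio u] u = ⊥})

theorem countable_not_continuousAt (hx : Cadlag T x) :
    {s ∈ Ioo 0 T | ¬ContinuousAt x s}.Countable := by
  refine (countable_iUnion fun k : ℕ =>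
    hx.countable_bigLeftJumps (Nat.one_div_pos_of_nat (n := k))).mono ?_
  rintro s ⟨hs, hdisc⟩
  have hleft : ¬Tendsto x (𝓝[<] s) (𝓝 (x s)) := fun hleft =>
    hdisc (continuousAt_iff_continuous_left'_right'.2
      ⟨hleft, (hx.1 s ⟨hs.1.le, hs.2⟩).mono_left (nhdsWithin_mono _ Ioi_subset_Ici_self)⟩)
  simp only [Metric.tendsto_nhds, not_forall, not_eventually, not_lt] at hleft
  obtain ⟨ε, hε, hjump⟩ := hleft
  obtain ⟨k, hk⟩ := exists_nat_one_div_lt hε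
  exact mem_iUnion.2 ⟨k, hs, hjump.mono fun v hv => hk.le.trans hv⟩

theorem aestronglyMeasurable (hx : Cadlag T x) :
    AEStronglyMeasurable x (volume.restrict (Icc 0 T)) := by
  have hD := hx.countable_not_continuousAt
  have hcont : ContinuousOn x (Ioo 0 T \ {s ∈ Ioo 0 T | ¬ContinuousAt x s}) :=
    fun s hs => (not_not.1 fun h => hs.2 ⟨hs.1, h⟩).continuousWithinAt
  rw [← Measure.restrict_congr_set ((sdiff_null_ae_eq_self (hD.measure_zero _)).trans
    Ioo_ae_eq_Icc)]
  exact hcont.aestronglyMeasurable (measurableSet_Ioo.diff hD.measurableSet)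


theorem integrableOn (hx : Cadlag T x) : IntegrableOn x (Icc 0 T) :=
  let ⟨_, hM⟩ := hx.exists_bound
  integrableOn_Icc_of_abs_le hx.aestronglyMeasurable hM

theorem exists_bound_comp_mul (hx : Cadlag T x) {h α : ℝ → ℝ} (hh : Continuous h)
    (hα : ContinuousOn α (Icc 0 T)) : ∃ M, ∀ s ∈ Icc 0 T, |h (x s) * α s| ≤ M := by
  obtain ⟨B, hB⟩ := hx.exists_bound
  obtain ⟨M₁, hM₁⟩ := isCompact_Icc.exists_bound_of_continuousOn (hh.continuousOn (s := Icc (-B) B))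
  obtain ⟨M₂, hM₂⟩ := isCompact_Icc.exists_bound_of_continuousOn hα
  refine ⟨M₁ * M₂, fun s hs => ?_⟩
  have hhx : |h (x s)| ≤ M₁ := hM₁ _ (abs_le.1 (hB s hs))
  rw [abs_mul]
  exact mul_le_mul hhx (hM₂ s hs) (abs_nonneg _) ((abs_nonneg _).trans hhx)

theorem integrableOn_comp_mul (hx : Cadlag T x) {h α : ℝ → ℝ} (hh : Continuous h)
    (hα : ContinuousOn α (Icc 0 T)) : IntegrableOn (fun s => h (x s) * α s) (Icc 0 T) :=
  let ⟨_, hM⟩ := hx.exists_bound_comp_mul hh hα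
  integrableOn_Icc_of_abs_le ((hh.comp_aestronglyMeasurable hx.aestronglyMeasurable).mul
    (hα.aestronglyMeasurable measurableSet_Icc)) hM

end Cadlag

theorem integral_le_exp_mul_integral_of_le_add_mul_integral {g a : ℝ → ℝ} {C T : ℝ}
    (hT : 0 ≤ T) (hC : 0 ≤ C) (hg : IntegrableOn g (Icc 0 T)) (ha : IntegrableOn a (Icc 0 T))
    (ha0 : ∀ s ∈ Icc 0 T, 0 ≤ a s) (hga : ∀ t ∈ Icc 0 T, g t ≤ a t + C * ∫ s in 0..t, g s) :
    ∫ s in 0..T, g s ≤ Real.exp (C * T) * ∫ s in 0..T, a s := by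
  have hTmem : T ∈ Icc 0 T := right_mem_Icc.2 hT
  have hsub : ∀ t ∈ Icc 0 T, uIcc 0 t ⊆ Icc 0 T := fun t ht =>
    uIcc_subset_Icc (left_mem_Icc.2 hT) ht
  -- extending `g` by zero makes its primitive continuous on all of `ℝ`
  set G := (Icc 0 T).indicator g
  have hG : Integrable G := hg.integrable_indicator measurableSet_Icc
  have hGg : ∀ t ∈ Icc 0 T, ∫ s in 0..t, G s = ∫ s in 0..t, g s := fun t ht =>
    intervalIntegral.integral_congr fun s hs => indicator_of_mem (hsub t ht hs) g
  set I := fun t => ∫ s in 0..t, G s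
  have hI : Continuous I :=
    intervalIntegral.continuous_primitive (fun _ _ => hG.intervalIntegrable) 0
  set Ia := ∫ s in 0..T, a s
  have hIJ : ∀ t ∈ Icc 0 T, I t ≤ Ia + C * ∫ s in 0..t, I s := by
    intro t ht
    have hat : ∫ s in 0..t, a s ≤ Ia :=
      intervalIntegral.integral_mono_interval le_rfl ht.1 ht.2
        ((ae_restrict_iff' measurableSet_Ioc).2
          (ae_of_all _ fun s hs => ha0 s (Ioc_subset_Icc_self hs)))
        ((ha.mono_set (hsub T hTmem)).intervalIntegrable)
    have hmono : ∫ s in 0..t, g s ≤ ∫ s in 0..t, (a s + C * I s) :=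
      intervalIntegral.integral_mono_on ht.1 (hg.mono_set (hsub t ht)).intervalIntegrable
        ((ha.mono_set (hsub t ht)).intervalIntegrable.add
          ((hI.intervalIntegrable 0 t).const_mul C))
        fun s hs => (hga s ⟨hs.1, hs.2.trans ht.2⟩).trans_eq
          (by rw [← hGg s ⟨hs.1, hs.2.trans ht.2⟩])
    rw [intervalIntegral.integral_add (ha.mono_set (hsub t ht)).intervalIntegrable
      ((hI.intervalIntegrable 0 t).const_mul C), intervalIntegral.integral_const_mul] at hmono
    rw [show I t = ∫ s in 0..t, g s from hGg t ht]
    linarith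
  set J := fun t => Ia + C * ∫ s in 0..t, I s
  have hJ : ∀ t, HasDerivAt J (C * I t) t := fun t =>
    ((hI.integral_hasStrictDerivAt 0 t).hasDerivAt.const_mul C).const_add Ia
  have hJT := le_gronwallBound_of_liminf_deriv_right_le (f := J) (δ := Ia) (ε := 0)
    (fun t _ => (hJ t).continuousAt.continuousWithinAt)
    (fun t _ _ hr => (hJ t).hasDerivWithinAt.liminf_right_slope_le hr) (by simp [J])
    (fun t ht => by simpa using mul_le_mul_of_nonneg_left (hIJ t (Ico_subset_Icc_self ht)) hC)
    T hTmem
  rw [gronwallBound_ε0, sub_zero] at hJT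
  calc ∫ s in 0..T, g s = I T := (hGg T hTmem).symm
    _ ≤ J T := hIJ T hTmem
    _ ≤ Ia * Real.exp (C * T) := hJT
    _ = Real.exp (C * T) * Ia := mul_comm _ _

section Stability

variable {T y₀ A : ℝ} {L : NNReal} {h α Θ₁ Θ₂ Y₁ Y₂ : ℝ → ℝ}

theorem abs_integral_comp_mul_sub_le (hh : LipschitzWith L h) (hα : ContinuousOn α (Icc 0 T))
    (hA : ∀ s ∈ Icc 0 T, |α s| ≤ A) (hY₁ : Cadlag T Y₁) (hY₂ : Cadlag T Y₂) {t : ℝ}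
    (ht : t ∈ Icc 0 T) :
    |∫ u in 0..t, (h (Y₁ u) * α u - h (Y₂ u) * α u)| ≤ L * A * ∫ u in 0..t, |Y₁ u - Y₂ u| := by
  have hsub : uIcc 0 t ⊆ Icc 0 T := uIcc_subset_Icc (left_mem_Icc.2 (ht.1.trans ht.2)) ht
  have hF : IntegrableOn (fun u => |h (Y₁ u) * α u - h (Y₂ u) * α u|) (Icc 0 T) :=
    ((hY₁.integrableOn_comp_mul hh.continuous hα).sub
      (hY₂.integrableOn_comp_mul hh.continuous hα)).abs
  have hY : IntegrableOn (fun u => L * A * |Y₁ u - Y₂ u|) (Icc 0 T) :=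
    (hY₁.integrableOn.sub hY₂.integrableOn).abs.const_mul _
  rw [← intervalIntegral.integral_const_mul]
  refine (intervalIntegral.abs_integral_le_integral_abs ht.1).trans
    (intervalIntegral.integral_mono_on ht.1 (hF.mono_set hsub).intervalIntegrable
      (hY.mono_set hsub).intervalIntegrable fun u hu => ?_)
  have hlip : |h (Y₁ u) - h (Y₂ u)| ≤ L * |Y₁ u - Y₂ u| := by
    simpa only [Real.dist_eq] using hh.dist_le_mul (Y₁ u) (Y₂ u)
  rw [← sub_mul, abs_mul, mul_right_comm]
  exact mul_le_mul hlip (hA u ⟨hu.1, hu.2.trans ht.2⟩) (abs_nonneg _) ((abs_nonneg _).trans hlip)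

namespace ImpactSol

theorem sub_eq (hY₁ : ImpactSol T h α y₀ Θ₁ Y₁) (hY₂ : ImpactSol T h α y₀ Θ₂ Y₂)
    (hF₁ : IntegrableOn (fun u => h (Y₁ u) * α u) (Icc 0 T))
    (hF₂ : IntegrableOn (fun u => h (Y₂ u) * α u) (Icc 0 T)) {s t : ℝ} (hs : s ∈ Icc 0 T)
    (ht : t ∈ Icc 0 T) :
    Y₁ s - Y₂ t = (Θ₁ s - Θ₂ t) - (Θ₁ 0 - Θ₂ 0) -
      (∫ u in 0..s, (h (Y₁ u) * α u - h (Y₂ u) * α u)) - ∫ u in t..s, h (Y₂ u) * α u := by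
  have h0 : (0 : ℝ) ∈ Icc 0 T := left_mem_Icc.2 (hs.1.trans hs.2)
  have hi : ∀ {F : ℝ → ℝ}, IntegrableOn F (Icc 0 T) → ∀ {p}, p ∈ Icc 0 T →
      IntervalIntegrable F volume 0 p := fun hF _ hp =>
    (hF.mono_set (uIcc_subset_Icc h0 hp)).intervalIntegrable
  rw [hY₁.2 s hs, hY₂.2 t ht, intervalIntegral.integral_sub (hi hF₁ hs) (hi hF₂ hs),
    ← intervalIntegral.integral_interval_sub_left (hi hF₂ hs) (hi hF₂ ht)]
  ring

theorem integral_abs_sub_le (hh : LipschitzWith L h) (hα : ContinuousOn α (Icc 0 T))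
    (hA : ∀ s ∈ Icc 0 T, |α s| ≤ A) (hT : 0 ≤ T) (hΘ₁ : Cadlag T Θ₁) (hΘ₂ : Cadlag T Θ₂)
    (hY₁ : ImpactSol T h α y₀ Θ₁ Y₁) (hY₂ : ImpactSol T h α y₀ Θ₂ Y₂) :
    ∫ u in 0..T, |Y₁ u - Y₂ u| ≤
      Real.exp (L * A * T) * ((∫ u in 0..T, |Θ₁ u - Θ₂ u|) + T * |Θ₁ 0 - Θ₂ 0|) := by
  have hA0 : 0 ≤ A := (abs_nonneg _).trans (hA 0 (left_mem_Icc.2 hT))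
  have hΘ : IntegrableOn (fun u => |Θ₁ u - Θ₂ u|) (Icc 0 T) :=
    (hΘ₁.integrableOn.sub hΘ₂.integrableOn).abs
  have hY : IntegrableOn (fun u => |Y₁ u - Y₂ u|) (Icc 0 T) :=
    (hY₁.1.integrableOn.sub hY₂.1.integrableOn).abs
  have hgron := integral_le_exp_mul_integral_of_le_add_mul_integral
    (a := fun u => |Θ₁ u - Θ₂ u| + |Θ₁ 0 - Θ₂ 0|) hT (mul_nonneg L.coe_nonneg hA0) hY
    (hΘ.add (integrableOn_const measure_Icc_lt_top.ne)) (fun _ _ => by positivity)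
    fun t ht => by
      rw [hY₁.sub_eq hY₂ (hY₁.1.integrableOn_comp_mul hh.continuous hα)
        (hY₂.1.integrableOn_comp_mul hh.continuous hα) ht ht, intervalIntegral.integral_same,
        sub_zero]
      have hdrift := abs_integral_comp_mul_sub_le hh hα hA hY₁.1 hY₂.1 ht
      linarith [abs_sub (Θ₁ t - Θ₂ t - (Θ₁ 0 - Θ₂ 0))
        (∫ u in 0..t, (h (Y₁ u) * α u - h (Y₂ u) * α u)), abs_sub (Θ₁ t - Θ₂ t) (Θ₁ 0 - Θ₂ 0)]
  rwa [intervalIntegral.integral_add ((intervalIntegrable_iff_integrableOn_Icc_of_le hT).2 hΘ)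
    intervalIntegrable_const, intervalIntegral.integral_const, smul_eq_mul, sub_zero] at hgron

theorem abs_sub_le (hh : LipschitzWith L h) (hα : ContinuousOn α (Icc 0 T))
    (hA : ∀ s ∈ Icc 0 T, |α s| ≤ A) {M : ℝ} (hM : ∀ u ∈ Icc 0 T, |h (Y₂ u) * α u| ≤ M)
    (hΘ₁ : Cadlag T Θ₁) (hΘ₂ : Cadlag T Θ₂) (hY₁ : ImpactSol T h α y₀ Θ₁ Y₁)
    (hY₂ : ImpactSol T h α y₀ Θ₂ Y₂) {s t : ℝ} (hs : s ∈ Icc 0 T) (ht : t ∈ Icc 0 T) :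
    |Y₁ s - Y₂ t| ≤ |Θ₁ s - Θ₂ t| + |Θ₁ 0 - Θ₂ 0| + M * |s - t| +
      L * A * (Real.exp (L * A * T) * ((∫ u in 0..T, |Θ₁ u - Θ₂ u|) + T * |Θ₁ 0 - Θ₂ 0|)) := by
  have hT : 0 ≤ T := hs.1.trans hs.2
  have hA0 : 0 ≤ A := (abs_nonneg _).trans (hA 0 (left_mem_Icc.2 hT))
  have hdrift := abs_integral_comp_mul_sub_le hh hα hA hY₁.1 hY₂.1 hs
  have hmono : ∫ u in 0..s, |Y₁ u - Y₂ u| ≤ ∫ u in 0..T, |Y₁ u - Y₂ u| :=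
    intervalIntegral.integral_mono_interval le_rfl hs.1 hs.2 (ae_of_all _ fun _ => abs_nonneg _)
      ((intervalIntegrable_iff_integrableOn_Icc_of_le hT).2
        (hY₁.1.integrableOn.sub hY₂.1.integrableOn).abs)
  have hstab := hY₁.integral_abs_sub_le hh hα hA hT hΘ₁ hΘ₂ hY₂
  have hjump : |∫ u in t..s, h (Y₂ u) * α u| ≤ M * |s - t| :=
    intervalIntegral.norm_integral_le_of_norm_le_const (f := fun u => h (Y₂ u) * α u)
      fun u hu => hM u (uIcc_subset_Icc ht hs (uIoc_subset_uIcc hu))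
  rw [hY₁.sub_eq hY₂ (hY₁.1.integrableOn_comp_mul hh.continuous hα)
    (hY₂.1.integrableOn_comp_mul hh.continuous hα) hs ht]
  have hLA : 0 ≤ (L : ℝ) * A := mul_nonneg L.coe_nonneg hA0
  linarith [abs_sub (Θ₁ s - Θ₂ t - (Θ₁ 0 - Θ₂ 0) - ∫ u in 0..s, (h (Y₁ u) * α u - h (Y₂ u) * α u))
    (∫ u in t..s, h (Y₂ u) * α u), abs_sub (Θ₁ s - Θ₂ t - (Θ₁ 0 - Θ₂ 0))
    (∫ u in 0..s, (h (Y₁ u) * α u - h (Y₂ u) * α u)), abs_sub (Θ₁ s - Θ₂ t) (Θ₁ 0 - Θ₂ 0),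
    mul_le_mul_of_nonneg_left (hmono.trans hstab) hLA]

end ImpactSol

end Stability

theorem ContinuousOn.surjOn_Icc_self {f : ℝ → ℝ} {a b : ℝ} (hf : ContinuousOn f (Icc a b))
    (hab : a ≤ b) (ha : f a = a) (hb : f b = b) : SurjOn f (Icc a b) (Icc a b) := by
  simpa only [ha, hb] using hf.surjOn_Icc (left_mem_Icc.2 hab) (right_mem_Icc.2 hab)

namespace TendstoJ1

variable {T : ℝ} {x : ℕ → ℝ → ℝ} {x₀ : ℝ → ℝ}

theorem tendsto_apply_zero (hT : 0 ≤ T) (hconv : TendstoJ1 T x x₀) :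
    Tendsto (fun n => x n 0) atTop (𝓝 (x₀ 0)) := by
  obtain ⟨lam, hlam, hunif⟩ := hconv
  refine Metric.tendsto_atTop.2 fun ε hε => ?_
  obtain ⟨N, hN⟩ := hunif (ε / 2) (half_pos hε)
  refine ⟨N, fun n hn => ?_⟩
  have h0 := (hN n hn 0 (left_mem_Icc.2 hT)).2
  rw [(hlam n).2.2.1] at h0
  exact h0.trans_lt (half_lt_self hε)

theorem tendsto_apply_of_continuousAt (hconv : TendstoJ1 T x x₀) {s : ℝ} (hs : s ∈ Icc 0 T)
    (hcont : ContinuousAt x₀ s) : Tendsto (fun n => x n s) atTop (𝓝 (x₀ s)) := by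
  obtain ⟨lam, hlam, hunif⟩ := hconv
  refine Metric.tendsto_atTop.2 fun ε hε => ?_
  obtain ⟨δ, hδ, hclose⟩ := Metric.continuousAt_iff.1 hcont (ε / 2) (half_pos hε)
  obtain ⟨N, hN⟩ := hunif (min (δ / 2) (ε / 4)) (by positivity)
  refine ⟨N, fun n hn => ?_⟩
  obtain ⟨u, hu, rfl⟩ := (hlam n).1.surjOn_Icc_self (hs.1.trans hs.2) (hlam n).2.2.1
    (hlam n).2.2.2.1 hs
  obtain ⟨htime, hspace⟩ := hN n hn u hu
  have hx₀ : dist (x₀ u) (x₀ (lam n u)) < ε / 2 := hclose <| by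
    rw [Real.dist_eq, abs_sub_comm]; linarith [min_le_left (δ / 2) (ε / 4)]
  rw [Real.dist_eq] at hx₀ ⊢
  linarith [min_le_right (δ / 2) (ε / 4), abs_sub_le (x n (lam n u)) (x₀ u) (x₀ (lam n u))]

theorem eventually_abs_le (hconv : TendstoJ1 T x x₀) {B : ℝ} (hB : ∀ s ∈ Icc 0 T, |x₀ s| ≤ B) :
    ∀ᶠ n in atTop, ∀ s ∈ Icc 0 T, |x n s| ≤ B + 1 := by
  obtain ⟨lam, hlam, hunif⟩ := hconv
  obtain ⟨N, hN⟩ := hunif 1 one_pos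
  refine eventually_atTop.2 ⟨N, fun n hn s hs => ?_⟩
  obtain ⟨u, hu, rfl⟩ := (hlam n).1.surjOn_Icc_self (hs.1.trans hs.2) (hlam n).2.2.1
    (hlam n).2.2.2.1 hs
  linarith [(hN n hn u hu).2, hB u hu, abs_sub_abs_le_abs_sub (x n (lam n u)) (x₀ u)]

/-- Since `x₀` has countably many jumps, `xₙ → x₀` almost everywhere on `[0,T]`, boundedly. -/
theorem tendsto_integral_abs_sub (hT : 0 ≤ T) (hx : ∀ n, Cadlag T (x n)) (hx₀ : Cadlag T x₀)
    (hconv : TendstoJ1 T x x₀) :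
    Tendsto (fun n => ∫ s in 0..T, |x n s - x₀ s|) atTop (𝓝 0) := by
  obtain ⟨B, hB⟩ := hx₀.exists_bound
  simp only [intervalIntegral.integral_of_le hT, ← integral_Icc_eq_integral_Ioc]
  have hae : ∀ᵐ s ∂volume.restrict (Icc 0 T), Tendsto (fun n => |x n s - x₀ s|) atTop (𝓝 0) := by
    rw [← Measure.restrict_congr_set Ioo_ae_eq_Icc, ae_restrict_iff' measurableSet_Ioo]
    filter_upwards [hx₀.countable_not_continuousAt.ae_notMem volume] with s hD hs
    have hcont : ContinuousAt x₀ s := not_not.1 fun h => hD ⟨hs, h⟩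
    simpa using ((hconv.tendsto_apply_of_continuousAt (Ioo_subset_Icc_self hs) hcont).sub_const
      (x₀ s)).abs
  simpa using tendsto_integral_filter_of_dominated_convergence (F := fun n s => |x n s - x₀ s|)
    (fun _ => 2 * B + 1)
    (Eventually.of_forall fun n => ((hx n).aestronglyMeasurable.sub hx₀.aestronglyMeasurable).norm)
    ((hconv.eventually_abs_le hB).mono fun n hn => (ae_restrict_iff' measurableSet_Icc).2
      (ae_of_all _ fun s hs => by
        rw [Real.norm_eq_abs, abs_abs]
        linarith [abs_sub (x n s) (x₀ s), hn s hs, hB s hs]))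
    (integrable_const _) hae

end TendstoJ1

/-- J1-continuity of the solution map `Θ ↦ Y^Θ`: if the càdlàg strategies
`Θₙ` converge to `Θ` in the Skorokhod J1 topology, then the impact processes
`Y^{Θₙ}` converge to `Y^Θ` in the Skorokhod J1 topology. -/
theorem impact_process_J1_continuity
    (T : ℝ) (hT : 0 < T) (h α : ℝ → ℝ) (L K : NNReal)
    (hh : LipschitzWith L h) (hα : LipschitzOnWith K α (Set.Icc 0 T))
    (y₀ : ℝ) (Θn : ℕ → ℝ → ℝ) (Θ : ℝ → ℝ) (Yn : ℕ → ℝ → ℝ) (Y : ℝ → ℝ)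
    (hΘn : ∀ n, Cadlag T (Θn n)) (hΘ : Cadlag T Θ)
    (hconv : TendstoJ1 T Θn Θ)
    (hYn : ∀ n, ImpactSol T h α y₀ (Θn n) (Yn n))
    (hY : ImpactSol T h α y₀ Θ Y) :
    TendstoJ1 T Yn Y := by
  have hαc : ContinuousOn α (Icc 0 T) := hα.continuousOn
  obtain ⟨A, hA⟩ := isCompact_Icc.exists_bound_of_continuousOn hαc
  obtain ⟨M, hM⟩ := hY.1.exists_bound_comp_mul hh.continuous hαc
  have hM0 : 0 ≤ M := (abs_nonneg _).trans (hM 0 (left_mem_Icc.2 hT.le))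
  have herr : Tendsto (fun n => L * A * (Real.exp (L * A * T) *
      ((∫ u in 0..T, |Θn n u - Θ u|) + T * |Θn n 0 - Θ 0|))) atTop (𝓝 0) := by
    simpa using (((hconv.tendsto_integral_abs_sub hT.le hΘn hΘ).add
      (((hconv.tendsto_apply_zero hT.le).sub_const (Θ 0)).abs.const_mul T)).const_mul _).const_mul _
  obtain ⟨lam, hlam, hunif⟩ := hconv
  refine ⟨lam, hlam, fun ε hε => ?_⟩
  obtain ⟨N₁, hN₁⟩ := eventually_atTop.1 (herr.eventually (ge_mem_nhds (half_pos hε)))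
  obtain ⟨N₂, hN₂⟩ := hunif (ε / (2 * (2 + M))) (by positivity)
  have hδ : (2 + M) * (ε / (2 * (2 + M))) = ε / 2 := by field_simp
  refine ⟨max N₁ N₂, fun n hn t ht => ?_⟩
  obtain ⟨htime, hspace⟩ := hN₂ n (le_of_max_le_right hn) t ht
  have hstart := (hN₂ n (le_of_max_le_right hn) 0 (left_mem_Icc.2 hT.le)).2
  rw [(hlam n).2.2.1] at hstart
  have hest := (hYn n).abs_sub_le hh hαc hA hM (hΘn n) hΘ hY ((hlam n).2.2.2.2 ht) ht
  refine ⟨htime.trans (div_le_self hε.le (by linarith)), ?_⟩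
  linarith [hN₁ n (le_of_max_le_left hn), mul_le_mul_of_nonneg_left htime hM0]
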